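/- Let η : D → ℂ be a smooth function on a disc D = {z : |z| < ρ} ⊂ ℂ, and let m ≥ 1 be an integer. Then for every smooth compactly supported φ : D → ℂ, the principal value limit lim_{r → 0⁺} ∫_{r < |z| < ρ} (η(z)/z^m) · φ(z) dA(z) exists. -/

import Mathlib

open MeasureTheory Filter

namespace PVAux

open Complex Metric Finset

/-- The open annulus `r < ‖z‖ < ρ` in `ℂ`. -/
def ann (r ρ : ℝ) : Set ℂ := {z : ℂ | r < ‖z‖ ∧ ‖z‖ < ρ}

lemma ann_meas (r ρ : ℝ) : MeasurableSet (ann r ρ) := by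
  have : ann r ρ = {z : ℂ | r < ‖z‖} ∩ {z : ℂ | ‖z‖ < ρ} := rfl
  rw [this]
  exact (measurableSet_lt measurable_const measurable_norm).inter
    (measurableSet_lt measurable_norm measurable_const)

lemma ann_subset (r ρ : ℝ) : ann r ρ ⊆ ball (0 : ℂ) ρ := fun z hz => by
  simpa [mem_ball_zero_iff] using hz.2

lemma ann_vol (r ρ : ℝ) : volume (ann r ρ) ≠ ⊤ :=
  ((measure_mono (ann_subset r ρ)).trans_lt measure_ball_lt_top).ne

/-- A function is "PV-null" on the annulus: integrable with zero integral. -/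
def PV (r ρ : ℝ) (g : ℂ → ℂ) : Prop :=
  IntegrableOn g (ann r ρ) ∧ ∫ z in ann r ρ, g z = 0

lemma PV.const_mul {r ρ : ℝ} {g : ℂ → ℂ} (h : PV r ρ g) (c : ℂ) :
    PV r ρ (fun z => c * g z) :=
  ⟨h.1.const_mul c, by rw [integral_const_mul, h.2, mul_zero]⟩

lemma PV.sum {r ρ : ℝ} {ι : Type*} (t : Finset ι) (g : ι → ℂ → ℂ)
    (h : ∀ i ∈ t, PV r ρ (g i)) : PV r ρ (fun z => ∑ i ∈ t, g i z) := by
  refine ⟨integrable_finset_sum t fun i hi => (h i hi).1, ?_⟩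
  rw [integral_finset_sum t fun i hi => (h i hi).1]
  exact Finset.sum_eq_zero fun i hi => (h i hi).2

lemma PV.congr {r ρ : ℝ} {g g' : ℂ → ℂ} (h : PV r ρ g) (he : ∀ z, g z = g' z) :
    PV r ρ g' := by
  have : g = g' := funext he
  exact this ▸ h

/-- A pure monomial `z^j conj(z)^l / z^m` with `j + l < m` is PV-null on any annulus
with inner radius `r > 0`, by rotation invariance. -/
lemma pv_monomial (r ρ : ℝ) (hr : 0 < r) {j l m : ℕ} (hjl : j + l < m) :
    PV r ρ (fun z : ℂ => z ^ j * (starRingEnd ℂ) z ^ l / z ^ m) := by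
  have hm0 : m ≠ 0 := by omega
  constructor
  · -- integrability
    apply Measure.integrableOn_of_bounded (M := ρ ^ (j + l) / r ^ m) (ann_vol r ρ)
    · exact (((measurable_id.pow_const j).mul
        ((continuous_star.measurable).pow_const l)).div
        (measurable_id.pow_const m)).aestronglyMeasurable
    · filter_upwards [ae_restrict_mem (ann_meas r ρ)] with z hz
      obtain ⟨h1, h2⟩ := hz
      have h0 : 0 < ‖z‖ := hr.trans h1
      have hρ0 : 0 < ρ := h0.trans h2
      rw [norm_div, norm_mul, norm_pow, norm_pow, norm_pow, RCLike.norm_conj, ← pow_add]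
      exact div_le_div₀ (by positivity) (pow_le_pow_left₀ (norm_nonneg z) h2.le _)
        (by positivity) (pow_le_pow_left₀ hr.le h1.le _)
  · -- the integral vanishes by rotation invariance
    set θ : ℝ := Real.pi / (j + l + m + 1) with hθ
    have hJ : (0:ℝ) ≤ (j:ℝ) + l + m := by positivity
    have hθpos : 0 < θ := div_pos Real.pi_pos (by positivity)
    set ω : Circle := Circle.exp θ with hω
    have hω0 : (ω : ℂ) ≠ 0 := ω.coe_ne_zero
    set g : ℂ → ℂ := fun z => z ^ j * (starRingEnd ℂ) z ^ l / z ^ m with hg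
    set κ : ℂ := (ω : ℂ) ^ j * (starRingEnd ℂ) (ω : ℂ) ^ l / (ω : ℂ) ^ m with hκ
    have hωz : ∀ z : ℂ, g ((rotation ω) z) = κ * g z := by
      intro z
      simp only [hg, rotation_apply, hκ]
      rcases eq_or_ne z 0 with rfl | hz
      · simp [zero_pow hm0]
      · simp only [map_mul, mul_pow]
        field_simp
    have hmp := (rotation ω).measurePreserving
    have hemb : MeasurableEmbedding (rotation ω) :=
      (rotation ω).toHomeomorph.measurableEmbedding
    have hpre : (rotation ω) ⁻¹' ann r ρ = ann r ρ := by
      ext z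
      have : ‖(ω : ℂ) * z‖ = ‖z‖ := by
        rw [norm_mul]
        simp [Circle.norm_coe]
      simp [ann, rotation_apply, this, Circle.norm_coe]
    have key : ∫ z in ann r ρ, g z = κ * ∫ z in ann r ρ, g z := by
      calc ∫ z in ann r ρ, g z
          = ∫ z in (rotation ω) ⁻¹' ann r ρ, g ((rotation ω) z) :=
            (hmp.setIntegral_preimage_emb hemb g _).symm
        _ = ∫ z in ann r ρ, κ * g z := by rw [hpre]; simp_rw [hωz]
        _ = κ * ∫ z in ann r ρ, g z := integral_const_mul _ _
    have hκ1 : κ ≠ 1 := by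
      have hconj : (starRingEnd ℂ) (ω : ℂ) = Complex.exp (-(θ * I)) := by
        rw [hω, Circle.coe_exp, ← Complex.exp_conj]
        congr 1
        simp [Complex.conj_I]
      have hκeq : κ = Complex.exp (((((j:ℝ) - l - m) * θ : ℝ) : ℂ) * I) := by
        rw [hκ, hconj, hω, Circle.coe_exp, ← Complex.exp_nat_mul, ← Complex.exp_nat_mul,
          ← Complex.exp_nat_mul, div_eq_mul_inv, ← Complex.exp_neg, ← Complex.exp_add,
          ← Complex.exp_add]
        congr 1
        push_cast
        ring
      intro hone
      rw [hκeq, Complex.exp_eq_one_iff] at hone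
      obtain ⟨n, hn⟩ := hone
      have hc : (((j:ℝ) - l - m) * θ) = n * (2 * Real.pi) := by
        have h2 : ((((j:ℝ) - l - m) * θ : ℝ) : ℂ) * I = ((n : ℝ) * (2 * Real.pi) : ℝ) * I := by
          rw [hn]; push_cast; ring
        have h3 := mul_right_cancel₀ Complex.I_ne_zero h2
        exact_mod_cast h3
      have hneg : ((j:ℝ) - l - m) * θ < 0 := by
        apply mul_neg_of_neg_of_pos _ hθpos
        have : (j:ℝ) < m := by exact_mod_cast (by omega : j < m)
        have hl : (0:ℝ) ≤ l := by positivity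
        linarith
      have hbig : -Real.pi < ((j:ℝ) - l - m) * θ := by
        have h1 : ((j:ℝ) + l + m) * θ < Real.pi := by
          rw [hθ, mul_div_assoc']
          rw [div_lt_iff₀ (by positivity)]
          nlinarith [Real.pi_pos]
        nlinarith [hθpos.le, (by positivity : (0:ℝ) ≤ (j:ℝ))]
      rcases le_or_gt 0 n with hn0 | hn0
      · have : (0:ℝ) ≤ (n:ℝ) * (2 * Real.pi) := by
          have : (0:ℝ) ≤ (n:ℝ) := by exact_mod_cast hn0
          positivity
        linarith [hc ▸ hneg]
      · have hn1 : (n:ℝ) ≤ -1 := by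
          have : n ≤ -1 := by omega
          exact_mod_cast this
        nlinarith [Real.pi_pos, hc ▸ hbig]
    have hsub : κ * (∫ z in ann r ρ, g z) - (∫ z in ann r ρ, g z) = 0 := by
      rw [← key, sub_self]
    have : (κ - 1) * ∫ z in ann r ρ, g z = 0 := by
      rw [sub_mul, one_mul, hsub]
    rcases mul_eq_zero.mp this with h | h
    · exact absurd (sub_eq_zero.mp h) hκ1
    · exact h

/-- `re(z)^a im(z)^b K / z^m` with `a + b < m` is PV-null on any annulus. -/
lemma pv_xy (r ρ : ℝ) (hr : 0 < r) {a b m : ℕ} (hab : a + b < m) (K : ℂ) :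
    PV r ρ (fun z : ℂ => (z.re : ℂ) ^ a * (z.im : ℂ) ^ b * K / z ^ m) := by
  have key : ∀ z : ℂ, (z.re : ℂ) ^ a * (z.im : ℂ) ^ b * K / z ^ m
      = ∑ p ∈ range (a + 1), ∑ q ∈ range (b + 1),
          (((a.choose p : ℂ) * (b.choose q) * (-1) ^ (b - q) * K) / ((2:ℂ) ^ a * (2 * I) ^ b)) *
            (z ^ (p + q) * (starRingEnd ℂ) z ^ (a - p + (b - q)) / z ^ m) := by
    intro z
    set w := (starRingEnd ℂ) z with hw
    have hxx : (z.re : ℂ) = (z + w) / 2 := by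
      rw [eq_div_iff (two_ne_zero), hw, Complex.add_conj]
      push_cast
      ring
    have hyy : (z.im : ℂ) = (z - w) / (2 * I) := by
      rw [eq_div_iff (by simp [Complex.I_ne_zero] : (2:ℂ) * I ≠ 0), hw, Complex.sub_conj]
      push_cast
      ring
    rw [hxx, hyy, div_pow, div_pow, div_mul_div_comm, add_pow, sub_eq_add_neg, add_pow,
      Finset.sum_mul_sum]
    rw [div_mul_eq_mul_div, div_div, Finset.sum_mul, Finset.sum_div]
    refine Finset.sum_congr rfl fun p hp => ?_
    rw [Finset.sum_mul, Finset.sum_div]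
    refine Finset.sum_congr rfl fun q hq => ?_
    rw [pow_add z p q, pow_add w (a - p) (b - q), neg_pow w (b - q)]
    ring
  refine (PV.sum _ _ fun p hp => PV.sum _ _ fun q hq => ?_).congr fun z => (key z).symm
  have hp' : p ≤ a := by have := Finset.mem_range.mp hp; omega
  have hq' : q ≤ b := by have := Finset.mem_range.mp hq; omega
  have hlt : (p + q) + (a - p + (b - q)) < m := by omega
  exact (pv_monomial r ρ hr hlt).const_mul _

/-- The diagonal of a continuous `ℝ`-multilinear map of degree `k < m`, divided by `z^m`,
is PV-null on any annulus. -/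
lemma pv_multi (r ρ : ℝ) (hr : 0 < r) {k m : ℕ} (hk : k < m)
    (M : ContinuousMultilinearMap ℝ (fun _ : Fin k => ℂ) ℂ) :
    PV r ρ (fun z : ℂ => M (fun _ => z) / z ^ m) := by
  classical
  have key : ∀ z : ℂ, M (fun _ => z) / z ^ m = ∑ s : Finset (Fin k),
      (z.re : ℂ) ^ s.card * (z.im : ℂ) ^ (k - s.card) *
        M (s.piecewise (fun _ => (1:ℂ)) (fun _ => I)) / z ^ m := by
    intro z
    rw [← Finset.sum_div]
    congr 1
    have hz : (fun _ : Fin k => z) = (fun _ => z.re • (1:ℂ)) + fun _ => z.im • I := by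
      funext i
      simp only [Pi.add_apply, Complex.real_smul, mul_one]
      exact (Complex.re_add_im z).symm
    rw [hz, M.map_add_univ]
    refine Finset.sum_congr rfl fun s _ => ?_
    have hpw : s.piecewise (fun _ => z.re • (1:ℂ)) (fun _ => z.im • I)
        = fun i => (s.piecewise (fun _ => z.re) (fun _ => z.im) i) •
            (s.piecewise (fun _ => (1:ℂ)) (fun _ => I) i) := by
      funext i
      by_cases hi : i ∈ s <;> simp [Finset.piecewise, hi]
    rw [hpw, M.map_smul_univ]
    have hprod : (∏ i : Fin k, (s.piecewise (fun _ => z.re) (fun _ => z.im)) i)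
        = z.re ^ s.card * z.im ^ (k - s.card) := by
      rw [Finset.prod_piecewise]
      simp [Finset.prod_const, Finset.card_univ_diff]
    rw [hprod, Complex.real_smul]
    push_cast
    ring
  refine (PV.sum _ _ fun s _ => ?_).congr fun z => (key z).symm
  have hcard : s.card ≤ k := by simpa using Finset.card_le_card (Finset.subset_univ s)
  exact pv_xy r ρ hr (by omega) _

/-- For a globally smooth function, iterated derivatives within a unique-diff set agree with
the global ones. -/
lemma iteratedDerivWithin_eq_iteratedDeriv' {g : ℝ → ℂ} (hg : ContDiff ℝ (⊤ : ℕ∞) g) {s : Set ℝ}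
    (hs : UniqueDiffOn ℝ s) {x : ℝ} (hx : x ∈ s) (n : ℕ) :
    iteratedDerivWithin n g s x = iteratedDeriv n g x := by
  rw [iteratedDerivWithin_eq_iteratedFDerivWithin, iteratedDeriv_eq_iteratedFDeriv]
  congr 1
  have hg' : ContDiff ℝ ((⊤:ℕ∞) : WithTop ℕ∞) g := hg.of_le (by simp)
  have h := (contDiff_iff_ftaylorSeries.mp hg').hasFTaylorSeriesUpToOn s
  exact (h.eq_iteratedFDerivWithin_of_uniqueDiffOn (m := n) (by exact_mod_cast le_top) hs hx).symm

end PVAux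

open PVAux Metric Complex

/-- Existence of the principal value: for `η` smooth on the disc `|z| < ρ`,
`m ≥ 1`, and `φ` smooth with compact support in the disc, the limit
`lim_{r→0⁺} ∫_{r<|z|<ρ} (η(z)/zᵐ)·φ(z) dA(z)` exists.  Hence `η(z)/zᵐ` defines
a principal value current. -/
theorem stmt9 (ρ : ℝ) (hρ : 0 < ρ) (η φ : ℂ → ℂ)
    (hη : ContDiffOn ℝ (⊤ : ℕ∞) η (Metric.ball 0 ρ))
    (hφ : ContDiff ℝ (⊤ : ℕ∞) φ) (hφsupp : HasCompactSupport φ)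
    (hsupp : tsupport φ ⊆ Metric.ball 0 ρ)
    (m : ℕ) (hm : 1 ≤ m) :
    ∃ L : ℂ, Tendsto
      (fun r : ℝ => ∫ z in {z : ℂ | r < ‖z‖ ∧ ‖z‖ < ρ}, η z / z ^ m * φ z)
      (nhdsWithin 0 (Set.Ioi 0)) (nhds L) := by
  classical
  set f : ℂ → ℂ := fun z => η z * φ z with hfdef
  have hf : ContDiff ℝ (⊤ : ℕ∞) f := by
    rw [contDiff_iff_contDiffAt]
    intro x
    by_cases hx : x ∈ Metric.ball (0:ℂ) ρ
    · exact (hη.contDiffAt (Metric.isOpen_ball.mem_nhds hx)).mul hφ.contDiffAt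
    · have hx' : x ∉ tsupport φ := fun h => hx (hsupp h)
      have hev : f =ᶠ[nhds x] fun _ => 0 := by
        filter_upwards [(isClosed_tsupport φ).isOpen_compl.mem_nhds hx'] with y hy
        simp [hfdef, image_eq_zero_of_notMem_tsupport hy]
      exact (contDiffAt_const (c := (0:ℂ))).congr_of_eventuallyEq hev
  have hfc : HasCompactSupport f := hφsupp.mul_left
  obtain ⟨M, hM⟩ := (hfc.iteratedFDeriv m).exists_bound_of_continuous
    (hf.continuous_iteratedFDeriv (by exact_mod_cast le_top))
  have hM0 : 0 ≤ M := le_trans (norm_nonneg _) (hM 0)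
  set n : ℕ := m - 1 with hn
  have hmn : m = n + 1 := (Nat.succ_pred_eq_of_pos hm).symm
  have hm0 : m ≠ 0 := by omega
  set P : ℂ → ℂ := fun z => ∑ k ∈ Finset.range m,
    ((Nat.factorial k : ℂ))⁻¹ * iteratedFDeriv ℝ k f 0 (fun _ : Fin k => z) with hP
  set R : ℂ → ℂ := fun z => f z - P z with hRdef
  -- Taylor remainder estimate
  have hR : ∀ z : ℂ, ‖R z‖ ≤ (M / (Nat.factorial n)) * ‖z‖ ^ m := by
    intro z
    set lz : ℝ →L[ℝ] ℂ := ContinuousLinearMap.toSpanSingleton ℝ z with hlz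
    set g : ℝ → ℂ := f ∘ lz with hgdef
    have hg : ContDiff ℝ (⊤ : ℕ∞) g := hf.comp lz.contDiff
    have hdiv : ∀ (kk : ℕ) (y : ℝ), y ∈ Set.Icc (0:ℝ) 1 →
        iteratedDerivWithin kk g (Set.Icc 0 1) y = iteratedFDeriv ℝ kk f (y • z) fun _ => z := by
      intro kk y hy
      rw [iteratedDerivWithin_eq_iteratedDeriv' hg (uniqueDiffOn_Icc one_pos) hy,
        iteratedDeriv_eq_iteratedFDeriv]
      rw [hgdef, ContinuousLinearMap.iteratedFDeriv_comp_right lz hf y (by exact_mod_cast le_top)]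
      rw [ContinuousMultilinearMap.compContinuousLinearMap_apply]
      simp [hlz, ContinuousLinearMap.toSpanSingleton_apply]
    have hbound : ∀ y ∈ Set.Icc (0:ℝ) 1,
        ‖iteratedDerivWithin (n + 1) g (Set.Icc 0 1) y‖ ≤ M * ‖z‖ ^ m := by
      intro y hy
      rw [hdiv (n + 1) y hy, ← hmn]
      calc ‖iteratedFDeriv ℝ m f (y • z) fun _ => z‖
          ≤ ‖iteratedFDeriv ℝ m f (y • z)‖ * ∏ _i : Fin m, ‖z‖ :=
            (iteratedFDeriv ℝ m f (y • z)).le_opNorm _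
        _ ≤ M * ‖z‖ ^ m := by
            rw [Finset.prod_const, Finset.card_univ, Fintype.card_fin]
            exact mul_le_mul_of_nonneg_right (hM _) (by positivity)
    have htaylor := taylor_mean_remainder_bound (f := g) (a := 0) (b := 1) (x := 1) (n := n)
      zero_le_one ((hg.of_le (by exact_mod_cast le_top)).contDiffOn) (by norm_num) hbound
    have hTP : taylorWithinEval g n (Set.Icc 0 1) 0 1 = P z := by
      rw [taylor_within_apply, hP, ← hmn]
      refine Finset.sum_congr rfl fun k hk => ?_
      rw [hdiv k 0 (by norm_num)]
      rw [zero_smul]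
      rw [sub_zero, one_pow, mul_one, Complex.real_smul]
      push_cast
      ring
    have hg1 : g 1 = f z := by
      simp [hgdef, hlz, ContinuousLinearMap.toSpanSingleton_apply]
    have : ‖R z‖ ≤ M * ‖z‖ ^ m * (1 - 0) ^ (n + 1) / (Nat.factorial n) := by
      rw [hRdef]
      simpa [hg1, hTP] using htaylor
    calc ‖R z‖ ≤ M * ‖z‖ ^ m * (1 - 0) ^ (n + 1) / (Nat.factorial n) := this
      _ = (M / (Nat.factorial n)) * ‖z‖ ^ m := by
          simp
          ring
  set h : ℂ → ℂ := fun z => R z / z ^ m with hh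
  have hPcont : Continuous P := by
    apply continuous_finset_sum
    intro k _
    exact continuous_const.mul
      ((iteratedFDeriv ℝ k f 0).cont.comp (continuous_pi fun _ => continuous_id))
  have hmeas : Measurable h :=
    ((hf.continuous.sub hPcont).measurable).div (measurable_id.pow_const m)
  have hhb : ∀ z : ℂ, ‖h z‖ ≤ M / (Nat.factorial n) := by
    intro z
    rcases eq_or_ne z 0 with rfl | hz
    · simp only [hh, zero_pow hm0, div_zero, norm_zero]
      positivity
    · have hz0 : 0 < ‖z‖ := norm_pos_iff.mpr hz
      rw [hh]
      simp only [norm_div, norm_pow]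
      rw [div_le_iff₀ (by positivity)]
      exact hR z
  have hint : IntegrableOn h (Metric.ball (0:ℂ) ρ) :=
    Measure.integrableOn_of_bounded measure_ball_lt_top.ne hmeas.aestronglyMeasurable
      (Eventually.of_forall hhb)
  refine ⟨∫ z in Metric.ball (0:ℂ) ρ, h z, ?_⟩
  -- On each annulus the integral agrees with that of `h`.
  have heq : ∀ r ∈ Set.Ioo (0:ℝ) ρ,
      (∫ z in {z : ℂ | r < ‖z‖ ∧ ‖z‖ < ρ}, η z / z ^ m * φ z) = ∫ z in ann r ρ, h z := by
    intro r hr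
    have hPV : PV r ρ fun z => P z / z ^ m := by
      have hsplit : (fun z : ℂ => P z / z ^ m) = fun z => ∑ k ∈ Finset.range m,
          ((Nat.factorial k : ℂ))⁻¹ * iteratedFDeriv ℝ k f 0 (fun _ : Fin k => z) / z ^ m := by
        funext z
        rw [hP, Finset.sum_div]
      rw [hsplit]
      refine PV.sum _ _ fun k hk => ?_
      have hk' : k < m := Finset.mem_range.mp hk
      exact ((pv_multi r ρ hr.1 hk' (iteratedFDeriv ℝ k f 0)).const_mul
        ((Nat.factorial k : ℂ))⁻¹).congr fun z => (mul_div_assoc _ _ _).symm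
    have hfeq : ∀ z : ℂ, η z / z ^ m * φ z = P z / z ^ m + h z := by
      intro z
      rw [div_mul_eq_mul_div, hh, hRdef, ← add_div]
      congr 1
      simp [hfdef]
    have hset : {z : ℂ | r < ‖z‖ ∧ ‖z‖ < ρ} = ann r ρ := rfl
    rw [hset]
    calc ∫ z in ann r ρ, η z / z ^ m * φ z
        = ∫ z in ann r ρ, (P z / z ^ m + h z) := by
          exact integral_congr_ae (Eventually.of_forall fun z => hfeq z)
      _ = (∫ z in ann r ρ, P z / z ^ m) + ∫ z in ann r ρ, h z :=
          integral_add hPV.1 (hint.mono_set (ann_subset r ρ))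
      _ = ∫ z in ann r ρ, h z := by rw [hPV.2, zero_add]
  -- The integrals over annuli converge to the integral over the ball.
  have hlim : Tendsto (fun r : ℝ => ∫ z in ann r ρ, h z) (nhdsWithin 0 (Set.Ioi 0))
      (nhds (∫ z in Metric.ball (0:ℂ) ρ, h z)) := by
    rw [tendsto_iff_norm_sub_tendsto_zero]
    have hb : ∀ᶠ r in nhdsWithin (0:ℝ) (Set.Ioi 0),
        ‖(∫ z in ann r ρ, h z) - ∫ z in Metric.ball (0:ℂ) ρ, h z‖
          ≤ (M / (Nat.factorial n)) * (r ^ 2 * Real.pi) := by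
      filter_upwards [self_mem_nhdsWithin] with r hrr
      have hr : (0:ℝ) < r := hrr
      have hsub : ann r ρ ⊆ Metric.ball (0:ℂ) ρ := ann_subset r ρ
      have hd := integral_diff (ann_meas r ρ) hint hsub (f := h)
      have hsub2 : Metric.ball (0:ℂ) ρ \ ann r ρ ⊆ Metric.closedBall (0:ℂ) r := by
        rintro z ⟨hz1, hz2⟩
        rw [mem_closedBall_zero_iff]
        by_contra hcon
        push_neg at hcon
        exact hz2 ⟨hcon, mem_ball_zero_iff.mp hz1⟩
      calc ‖(∫ z in ann r ρ, h z) - ∫ z in Metric.ball (0:ℂ) ρ, h z‖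
          = ‖∫ z in Metric.ball (0:ℂ) ρ \ ann r ρ, h z‖ := by
            rw [hd, norm_sub_rev]
        _ ≤ (M / (Nat.factorial n)) * (volume (Metric.ball (0:ℂ) ρ \ ann r ρ)).toReal := by
            apply norm_setIntegral_le_of_norm_le_const
              ((measure_mono Set.diff_subset).trans_lt measure_ball_lt_top)
              (fun z _ => hhb z)
        _ ≤ (M / (Nat.factorial n)) * (volume (Metric.closedBall (0:ℂ) r)).toReal := by
            apply mul_le_mul_of_nonneg_left _ (by positivity)
            exact ENNReal.toReal_mono measure_closedBall_lt_top.ne (measure_mono hsub2)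
        _ = (M / (Nat.factorial n)) * (r ^ 2 * Real.pi) := by
            rw [Complex.volume_closedBall, ENNReal.toReal_mul, ENNReal.toReal_pow,
              ENNReal.toReal_ofReal hr.le, ENNReal.coe_toReal]
            norm_num
    have hg0 : Tendsto (fun r : ℝ => (M / (Nat.factorial n)) * (r ^ 2 * Real.pi))
        (nhdsWithin 0 (Set.Ioi 0)) (nhds 0) := by
      have hc : Continuous fun r : ℝ => (M / (Nat.factorial n)) * (r ^ 2 * Real.pi) :=
        continuous_const.mul ((continuous_pow 2).mul continuous_const)
      have := hc.tendsto' 0 0 (by norm_num)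
      exact this.mono_left nhdsWithin_le_nhds
    exact squeeze_zero' (Eventually.of_forall fun r => norm_nonneg _) hb hg0
  refine hlim.congr' ?_
  filter_upwards [Ioo_mem_nhdsGT_of_mem (show (0:ℝ) ∈ Set.Ico (0:ℝ) ρ from ⟨le_refl _, hρ⟩)]
    with r hr
  exact (heq r hr).symm
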